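/- Suppose M_c ∈ ℝ^{n×ρ_c} satisfies (1−δ_c)‖w‖₂² ≤ (n/ρ_c)‖M_c^⊤ w‖₂² ≤ (1+δ_c)‖w‖₂² for all w ∈ span(Q_{k_c}), with δ_c ∈ (0,1), and assume λ_{k_c+1} > 0. Let c̄ ∈ ℝ^n lie in span(Q_{k_c}) and set c̃ = M_c^⊤ c̄. Let c° be a minimizer of c^⊤ L_c c over all c ∈ ℝ^n with M_c^⊤ c = c̃, and set c* = Q_{k_c} Q_{k_c}^⊤ c°. Then ‖c* − c̄‖₂ ≤ √(n/(ρ_c(1−δ_c))) √(λ_{k_c}/λ_{k_c+1}) ‖c̄‖₂. -/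

import Mathlib

open Matrix

/-- Frobenius norm of a real matrix. -/
noncomputable def frobNorm {m n : Type*} [Fintype m] [Fintype n] (A : Matrix m n ℝ) : ℝ :=
  Real.sqrt (∑ i, ∑ j, (A i j) ^ 2)

/-- Euclidean norm of a real vector. -/
noncomputable def vecNorm {n : Type*} [Fintype n] (x : n → ℝ) : ℝ :=
  Real.sqrt (∑ i, (x i) ^ 2)

/-- A row-selection matrix: its rows are distinct standard basis vectors of `ℝ^p`. -/
def IsRowSelection {ρ p : ℕ} (M : Matrix (Fin ρ) (Fin p) ℝ) : Prop :=
  ∃ f : Fin ρ → Fin p, Function.Injective f ∧ ∀ i j, M i j = if j = f i then 1 else 0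

/-- A column-selection matrix: its columns are distinct standard basis vectors of `ℝ^n`. -/
def IsColSelection {n ρ : ℕ} (M : Matrix (Fin n) (Fin ρ) ℝ) : Prop :=
  ∃ f : Fin ρ → Fin n, Function.Injective f ∧ ∀ i j, M i j = if i = f j then 1 else 0

/-- `y` lies in the span of the columns of `P`. -/
def inColSpan {p k : ℕ} (P : Matrix (Fin p) (Fin k) ℝ) (y : Fin p → ℝ) : Prop :=
  ∃ c : Fin k → ℝ, y = P.mulVec c

/-- `Y ∈ LR(P, Q)`: every column of `Y` lies in the column span of `P` and every row of `Y`
lies in the column span of `Q`. -/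
def memLR {p n kr kc : ℕ} (P : Matrix (Fin p) (Fin kr) ℝ) (Q : Matrix (Fin n) (Fin kc) ℝ)
    (Y : Matrix (Fin p) (Fin n) ℝ) : Prop :=
  (∀ j, inColSpan P (fun i => Y i j)) ∧ (∀ i, inColSpan Q (fun j => Y i j))

/-- Graph cumulative coherence `ν = max_i √n ‖Q^⊤ e_i‖₂`. -/
noncomputable def coherence {n k : ℕ} (Q : Matrix (Fin n) (Fin k) ℝ) : ℝ :=
  ⨆ i : Fin n, Real.sqrt n * vecNorm (fun j => Q i j)


/-!
Split `c°` into its projection `c* = Q_{k_c} Q_{k_c}ᵀ c°` and the residual `r = c° - c*`.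
Because `M_cᵀ c° = M_cᵀ c̄`, the error `c* - c̄` lies in `span Q_{k_c}` and is sampled to
`-M_cᵀ r`, so the sampling inequality gives `(1 - δ_c) ‖c* - c̄‖² ≤ (n / ρ_c) ‖r‖²`.
The residual lives in the eigenspaces above `λ_{k_c}`, and `c̄` competes in the minimisation, so
`λ_{k_c+1} ‖r‖² ≤ c°ᵀ L_c c° ≤ c̄ᵀ L_c c̄ ≤ λ_{k_c} ‖c̄‖²`.
-/

open Function

lemma vecNorm_eq_sqrt_dotProduct {ι : Type*} [Fintype ι] (v : ι → ℝ) :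
    vecNorm v = √(v ⬝ᵥ v) := by
  simp only [vecNorm, dotProduct, sq]

lemma vecNorm_sq {ι : Type*} [Fintype ι] (v : ι → ℝ) : vecNorm v ^ 2 = v ⬝ᵥ v := by
  rw [vecNorm_eq_sqrt_dotProduct, Real.sq_sqrt (by simpa using dotProduct_self_star_nonneg v)]

section OrthonormalColumns

variable {ι κ : Type*} [Fintype ι] [Fintype κ] [DecidableEq κ] {V : Matrix ι κ ℝ}

lemma mulVec_dotProduct_mulVec_of_transpose_mul_self_eq_one (hV : Vᵀ * V = 1) (x y : κ → ℝ) :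
    V *ᵥ x ⬝ᵥ V *ᵥ y = x ⬝ᵥ y := by
  rw [dotProduct_mulVec, ← mulVec_transpose, mulVec_mulVec, hV, one_mulVec]

lemma sub_mulVec_transpose_dotProduct_self (hV : Vᵀ * V = 1) (v : ι → ℝ) :
    (v - V *ᵥ (Vᵀ *ᵥ v)) ⬝ᵥ (v - V *ᵥ (Vᵀ *ᵥ v)) = v ⬝ᵥ v - Vᵀ *ᵥ v ⬝ᵥ Vᵀ *ᵥ v := by
  have hcross : v ⬝ᵥ V *ᵥ (Vᵀ *ᵥ v) = Vᵀ *ᵥ v ⬝ᵥ Vᵀ *ᵥ v := by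
    rw [dotProduct_mulVec, ← mulVec_transpose]
  simp only [sub_dotProduct, dotProduct_sub, hcross, dotProduct_comm (V *ᵥ _) v,
    mulVec_dotProduct_mulVec_of_transpose_mul_self_eq_one hV]
  ring

lemma mulVec_dotProduct_mulVec_of_mul_eq_mul_diagonal {L : Matrix ι ι ℝ} {e : κ → ℝ}
    (hV : Vᵀ * V = 1) (hLV : L * V = V * diagonal e) (x : κ → ℝ) :
    V *ᵥ x ⬝ᵥ L *ᵥ (V *ᵥ x) = ∑ j, e j * x j ^ 2 := by
  rw [mulVec_mulVec, hLV, ← mulVec_mulVec,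
    mulVec_dotProduct_mulVec_of_transpose_mul_self_eq_one hV]
  simp only [dotProduct, mulVec_diagonal]
  exact Finset.sum_congr rfl fun j _ => by ring

lemma dotProduct_mulVec_le_of_mul_eq_mul_diagonal {L : Matrix ι ι ℝ} {e : κ → ℝ} {μ : ℝ}
    (hV : Vᵀ * V = 1) (hLV : L * V = V * diagonal e) (he : ∀ j, e j ≤ μ) (x : κ → ℝ) :
    V *ᵥ x ⬝ᵥ L *ᵥ (V *ᵥ x) ≤ μ * (V *ᵥ x ⬝ᵥ V *ᵥ x) := by
  rw [mulVec_dotProduct_mulVec_of_mul_eq_mul_diagonal hV hLV,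
    mulVec_dotProduct_mulVec_of_transpose_mul_self_eq_one hV, dotProduct, Finset.mul_sum]
  exact Finset.sum_le_sum fun j _ => by
    rw [← sq]; exact mul_le_mul_of_nonneg_right (he j) (sq_nonneg _)

lemma Matrix.PosSemidef.nonneg_of_mul_eq_mul_diagonal {L : Matrix ι ι ℝ} {e : κ → ℝ}
    (hL : L.PosSemidef) (hV : Vᵀ * V = 1) (hLV : L * V = V * diagonal e) (j : κ) :
    0 ≤ e j := by
  have h := hL.dotProduct_mulVec_nonneg (V *ᵥ Pi.single j 1)
  rwa [star_trivial, mulVec_dotProduct_mulVec_of_mul_eq_mul_diagonal hV hLV,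
    Finset.sum_eq_single j (fun i _ hi => by simp [hi]) (by simp), Pi.single_eq_same,
    one_pow, mul_one] at h

end OrthonormalColumns

section Submatrix

variable {ι κ : Type*} [Fintype ι] {Q : Matrix ι ι ℝ}

lemma transpose_mul_self_submatrix_eq_one [DecidableEq ι] [DecidableEq κ] {f : κ → ι}
    (hQ : Qᵀ * Q = 1) (hf : Injective f) : (Q.submatrix id f)ᵀ * Q.submatrix id f = 1 := by
  rw [transpose_submatrix, ← submatrix_mul _ _ _ _ _ bijective_id, hQ, submatrix_one _ hf]

lemma mul_submatrix_eq_mul_diagonal [DecidableEq ι] [Fintype κ] [DecidableEq κ]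
    {L : Matrix ι ι ℝ} {ev : ι → ℝ} (hLQ : L * Q = Q * diagonal ev) (f : κ → ι) :
    L * Q.submatrix id f = Q.submatrix id f * diagonal (ev ∘ f) := by
  rw [← submatrix_id_id L, ← submatrix_mul _ _ _ _ _ bijective_id, hLQ]
  ext i j
  simp [mul_diagonal]

lemma transpose_submatrix_mulVec (Q : Matrix ι ι ℝ) (f : κ → ι) (v : ι → ℝ) :
    (Q.submatrix id f)ᵀ *ᵥ v = (Qᵀ *ᵥ v) ∘ f := by
  ext j; simp [mulVec, dotProduct]

lemma mul_dotProduct_self_sub_proj_le_dotProduct_mulVec [DecidableEq ι] [Fintype κ]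
    [DecidableEq κ] {L : Matrix ι ι ℝ} {ev : ι → ℝ} {f : κ → ι} {lam : ℝ} (hQ : Qᵀ * Q = 1)
    (hLQ : L * Q = Q * diagonal ev) (hf : Injective f) (hev : ∀ i, 0 ≤ ev i)
    (hlam : ∀ i ∉ Set.range f, lam ≤ ev i) (v : ι → ℝ) :
    lam * ((v - Q.submatrix id f *ᵥ ((Q.submatrix id f)ᵀ *ᵥ v)) ⬝ᵥ
      (v - Q.submatrix id f *ᵥ ((Q.submatrix id f)ᵀ *ᵥ v))) ≤ v ⬝ᵥ L *ᵥ v := by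
  rw [sub_mulVec_transpose_dotProduct_self (transpose_mul_self_submatrix_eq_one hQ hf)]
  set y := Qᵀ *ᵥ v
  set s := Finset.univ.map ⟨f, hf⟩
  have hv : v = Q *ᵥ y := by rw [mulVec_mulVec, mul_eq_one_comm.mp hQ, one_mulVec]
  have hnorm : v ⬝ᵥ v = ∑ i, y i ^ 2 := by
    rw [hv, mulVec_dotProduct_mulVec_of_transpose_mul_self_eq_one hQ]
    simp only [dotProduct, sq]
  have hhead : (Q.submatrix id f)ᵀ *ᵥ v ⬝ᵥ (Q.submatrix id f)ᵀ *ᵥ v = ∑ i ∈ s, y i ^ 2 := by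
    rw [transpose_submatrix_mulVec, Finset.sum_map]
    simp only [dotProduct, sq, Function.comp_apply, Embedding.coeFn_mk, y]
  have htail : ∀ i ∈ sᶜ, lam ≤ ev i := fun i hi =>
    hlam i (by simpa [s, Finset.mem_compl] using hi)
  rw [hv, mulVec_dotProduct_mulVec_of_mul_eq_mul_diagonal hQ hLQ, ← hv, hnorm, hhead,
    ← Finset.sum_add_sum_compl s, ← Finset.sum_add_sum_compl s, add_sub_cancel_left,
    Finset.mul_sum]
  calc ∑ i ∈ sᶜ, lam * y i ^ 2 ≤ ∑ i ∈ sᶜ, ev i * y i ^ 2 :=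
        Finset.sum_le_sum fun i hi => mul_le_mul_of_nonneg_right (htail i hi) (sq_nonneg _)
    _ ≤ _ := le_add_of_nonneg_left (Finset.sum_nonneg fun i _ => by have := hev i; positivity)

end Submatrix

lemma IsColSelection.dotProduct_transpose_mulVec_le {n ρ : ℕ} {M : Matrix (Fin n) (Fin ρ) ℝ}
    (hM : IsColSelection M) (v : Fin n → ℝ) : Mᵀ *ᵥ v ⬝ᵥ Mᵀ *ᵥ v ≤ v ⬝ᵥ v := by
  obtain ⟨f, hf, hMf⟩ := hM
  have hsel : Mᵀ *ᵥ v = v ∘ f := by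
    ext j; simp [mulVec, dotProduct, hMf]
  rw [hsel, dotProduct, dotProduct]
  exact (Finset.sum_map Finset.univ ⟨f, hf⟩ fun i => v i * v i).symm.trans_le
    (Finset.sum_le_univ_sum_of_nonneg fun i => mul_self_nonneg _)

lemma vecNorm_le_sqrt_mul_sqrt_mul {ι : Type*} [Fintype ι] {v u : ι → ℝ} {a b : ℝ} (ha : 0 ≤ a)
    (h : v ⬝ᵥ v ≤ a * b * (u ⬝ᵥ u)) : vecNorm v ≤ √a * √b * vecNorm u := by
  rw [vecNorm_eq_sqrt_dotProduct, vecNorm_eq_sqrt_dotProduct, ← Real.sqrt_mul ha,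
    ← Real.sqrt_mul' _ (by simpa using dotProduct_self_star_nonneg u)]
  exact Real.sqrt_le_sqrt h

lemma le_div_mul_div_mul_of_mul_le_of_mul_le {W R C a b lo hi : ℝ} (ha : 0 ≤ a) (hb : 0 < b)
    (hhi : 0 < hi) (hW : b * W ≤ a * R) (hR : hi * R ≤ lo * C) :
    W ≤ a / b * (lo / hi) * C :=
  calc W ≤ a * R / b := (le_div_iff₀' hb).2 hW
    _ ≤ a * (lo * C / hi) / b := by gcongr; exact (le_div_iff₀' hhi).2 hR
    _ = a / b * (lo / hi) * C := by ring

-- `ev ⟨kc - 1, _⟩` and `ev ⟨kc, _⟩` are the paper's 1-indexed `λ_{k_c}` and `λ_{k_c+1}`.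
/-- error bound for the parameter-free clustering decoder:
`c°` minimizes `c^⊤ L_c c` subject to `M_c^⊤ c = c̃` where `c̃ = M_c^⊤ c̄`, and
`c* = Q_{k_c} Q_{k_c}^⊤ c°`. The 1-indexed eigenvalues `λ_{k_c}`, `λ_{k_c+1}` of `L_c`
are `ev ⟨k_c−1⟩`, `ev ⟨k_c⟩`. -/
theorem approximate_clustering_decoder_bound
    (n ρc kc : ℕ) (hkc : kc < n)
    (Lc : Matrix (Fin n) (Fin n) ℝ) (hLc : Lc.PosSemidef)
    (ev : Fin n → ℝ) (hev : Monotone ev)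
    (Q : Matrix (Fin n) (Fin n) ℝ) (hQorth : Qᵀ * Q = 1)
    (hLcQ : Lc * Q = Q * Matrix.diagonal ev)
    (Qkc : Matrix (Fin n) (Fin kc) ℝ) (hQkc : Qkc = Q.submatrix id (Fin.castLE hkc.le))
    (Mc : Matrix (Fin n) (Fin ρc) ℝ) (hMc : IsColSelection Mc)
    (δc : ℝ) (hδc : δc ∈ Set.Ioo (0 : ℝ) 1)
    (hRIP : ∀ w : Fin n → ℝ, inColSpan Qkc w →
      (1 - δc) * (vecNorm w) ^ 2 ≤ ((n : ℝ) / ρc) * (vecNorm (Mcᵀ.mulVec w)) ^ 2 ∧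
      ((n : ℝ) / ρc) * (vecNorm (Mcᵀ.mulVec w)) ^ 2 ≤ (1 + δc) * (vecNorm w) ^ 2)
    (hlam1 : 0 < ev ⟨kc, hkc⟩)
    (cbar : Fin n → ℝ) (hcbar : inColSpan Qkc cbar)
    (ctil : Fin ρc → ℝ) (hctil : ctil = Mcᵀ.mulVec cbar)
    (cnot : Fin n → ℝ) (hfeas : Mcᵀ.mulVec cnot = ctil)
    (hmin : ∀ c : Fin n → ℝ, Mcᵀ.mulVec c = ctil →
      cnot ⬝ᵥ Lc.mulVec cnot ≤ c ⬝ᵥ Lc.mulVec c) :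
    vecNorm (Qkc.mulVec (Qkcᵀ.mulVec cnot) - cbar) ≤
      Real.sqrt ((n : ℝ) / ((ρc : ℝ) * (1 - δc))) *
        Real.sqrt (ev ⟨kc - 1, by omega⟩ / ev ⟨kc, hkc⟩) * vecNorm cbar := by
  subst hQkc hctil
  have hδ : 0 < 1 - δc := sub_pos.2 hδc.2
  obtain ⟨d, rfl⟩ := hcbar
  set V := Q.submatrix id (Fin.castLE hkc.le)
  have hV : Vᵀ * V = 1 := transpose_mul_self_submatrix_eq_one hQorth (Fin.castLE_injective _)
  set r := cnot - V *ᵥ (Vᵀ *ᵥ cnot)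
  set w := V *ᵥ (Vᵀ *ᵥ cnot) - V *ᵥ d
  have hr : ev ⟨kc, hkc⟩ * (r ⬝ᵥ r) ≤ ev ⟨kc - 1, by omega⟩ * (V *ᵥ d ⬝ᵥ V *ᵥ d) :=
    calc ev ⟨kc, hkc⟩ * (r ⬝ᵥ r) ≤ cnot ⬝ᵥ Lc *ᵥ cnot :=
          mul_dotProduct_self_sub_proj_le_dotProduct_mulVec hQorth hLcQ (Fin.castLE_injective _)
            (hLc.nonneg_of_mul_eq_mul_diagonal hQorth hLcQ)
            (fun i hi => hev (by simpa [Fin.range_castLE, Fin.le_def] using hi)) cnot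
      _ ≤ V *ᵥ d ⬝ᵥ Lc *ᵥ (V *ᵥ d) := hmin _ rfl
      _ ≤ ev ⟨kc - 1, by omega⟩ * (V *ᵥ d ⬝ᵥ V *ᵥ d) :=
          dotProduct_mulVec_le_of_mul_eq_mul_diagonal hV (mul_submatrix_eq_mul_diagonal hLcQ _)
            (fun j => hev (by simp [Fin.le_def]; omega)) d
  have hw : (1 - δc) * (w ⬝ᵥ w) ≤ (n / ρc) * (r ⬝ᵥ r) := by
    have hMw : Mcᵀ *ᵥ w = -(Mcᵀ *ᵥ r) := by
      simp only [w, r, mulVec_sub, hfeas]; abel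
    have hsampled := (hRIP w ⟨Vᵀ *ᵥ cnot - d, by rw [mulVec_sub]⟩).1
    rw [vecNorm_sq, vecNorm_sq, hMw, neg_dotProduct_neg] at hsampled
    exact hsampled.trans (by gcongr; exact hMc.dotProduct_transpose_mulVec_le r)
  refine vecNorm_le_sqrt_mul_sqrt_mul (div_nonneg n.cast_nonneg (by positivity)) ?_
  rw [← div_div]
  exact le_div_mul_div_mul_of_mul_le_of_mul_le (by positivity) hδ hlam1 hw hr
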